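/- Let n be a positive natural number, γ > 0, δ > 0, K ≥ 0, C ≥ 0, μ > 0, and let Ψ : ℝ → ℝ^{n×n} be continuous with Ψ(t)ᵀΨ(t) ≥ δ·I_n and operator norm ‖Ψ(t)‖ ≤ K for all t ≥ 0, and let ε : ℝ → ℝ^n be continuous with |ε(t)| ≤ C·e^{−μt} for all t ≥ 0. If ϑ̃ : ℝ → ℝ^n is differentiable and satisfies ϑ̃'(t) = −γ·Ψ(t)ᵀΨ(t)·ϑ̃(t) + γ·Ψ(t)ᵀ·ε(t), then ϑ̃(t) → 0 as t → ∞; moreover, for any ν with 0 < ν < min(γδ, μ) there exists C' ≥ 0 such that |ϑ̃(t)| ≤ C'·e^{−νt} for all t ≥ 0. -/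

import Mathlib

/-!
With `V = |ϑ̃|²`, the error equation gives `V' = -2γ|Ψϑ̃|² + 2γ⟨Ψϑ̃, ε⟩`. Excitation bounds the
first term by `-2γδV`, and Cauchy–Schwarz followed by Young's inequality with weight `γδ - ν` bounds
the second by `2(γδ - ν)V + β e^{-2μt}`, where `β = (γKC)² / (2(γδ - ν))`. Hence
`V' ≤ -2νV + β e^{-2μt}`, and since `ν < μ` the function
`e^{2νt} V(t) + β e^{-2(μ-ν)t} / (2(μ-ν))` is nonincreasing on `[0, ∞)`,
so `V(t) ≤ (V(0) + β / (2(μ-ν))) e^{-2νt}`.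
-/

open Matrix Filter Finset Real

lemma le_mul_exp_of_hasDerivAt_le {V V' : ℝ → ℝ} {a b β : ℝ} (hab : a < b) (hβ : 0 ≤ β)
    (hV : ∀ t, 0 ≤ t → HasDerivAt V (V' t) t)
    (hV' : ∀ t, 0 ≤ t → V' t ≤ -a * V t + β * exp (-b * t)) {t : ℝ} (ht : 0 ≤ t) :
    V t ≤ (V 0 + β / (b - a)) * exp (-a * t) := by
  set F : ℝ → ℝ := fun s => exp (a * s) * V s + β / (b - a) * exp (-(b - a) * s)
  have hF : ∀ s, 0 ≤ s → HasDerivAt F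
      (a * exp (a * s) * V s + exp (a * s) * V' s
        + β / (b - a) * (exp (-(b - a) * s) * -(b - a))) s := by
    intro s hs
    have hlin : ∀ c : ℝ, HasDerivAt (fun u => c * u) c s := fun c => by
      simpa using (hasDerivAt_id s).const_mul c
    exact (((hlin a).exp.fun_mul (hV s hs)).fun_add
      ((hlin (-(b - a))).exp.const_mul (β / (b - a)))).congr_deriv (by ring)
  have hF' : ∀ s, 0 ≤ s → a * exp (a * s) * V s + exp (a * s) * V' s
      + β / (b - a) * (exp (-(b - a) * s) * -(b - a)) ≤ 0 := by
    intro s hs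
    have hexp : exp (a * s) * exp (-b * s) = exp (-(b - a) * s) := by
      rw [← exp_add]; ring_nf
    have hcancel : β / (b - a) * (exp (-(b - a) * s) * -(b - a)) = -(β * exp (-(b - a) * s)) := by
      field_simp [(sub_pos.2 hab).ne']
    nlinarith [mul_le_mul_of_nonneg_left (hV' s hs) (exp_pos (a * s)).le]
  have hFanti : AntitoneOn F (Set.Ici 0) := by
    refine antitoneOn_of_deriv_nonpos (convex_Ici 0)
      (fun s hs => (hF s hs).continuousAt.continuousWithinAt)
      (fun s hs => (hF s (interior_subset hs)).differentiableAt.differentiableWithinAt)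
      fun s hs => ?_
    rw [(hF s (interior_subset hs)).deriv]
    exact hF' s (interior_subset hs)
  have hFt : F t ≤ V 0 + β / (b - a) := by
    simpa [F] using hFanti Set.self_mem_Ici (Set.mem_Ici.2 ht) ht
  have hrest : 0 ≤ β / (b - a) * exp (-(b - a) * t) :=
    mul_nonneg (div_nonneg hβ (sub_pos.2 hab).le) (exp_pos _).le
  have hinv : exp (a * t) * exp (-a * t) = 1 := by rw [← exp_add]; simp
  calc V t = exp (a * t) * V t * exp (-a * t) := by rw [mul_comm (exp _), mul_assoc, hinv, mul_one]
    _ ≤ (V 0 + β / (b - a)) * exp (-a * t) := by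
      gcongr
      exact le_trans (by simp only [F]; linarith) hFt

section SumOfSquares

variable {ι : Type*} [Fintype ι]

lemma hasDerivAt_sum_sq {θ : ℝ → ι → ℝ} {θ' : ι → ℝ} {t : ℝ} (h : HasDerivAt θ θ' t) :
    HasDerivAt (fun s => ∑ j, θ s j ^ 2) (2 * (θ t ⬝ᵥ θ')) t := by
  rw [dotProduct, mul_sum]
  refine HasDerivAt.fun_sum fun j _ => ?_
  exact ((hasDerivAt_pi.1 h j).fun_pow 2).congr_deriv (by push_cast; ring)

lemma abs_le_sqrt_sum_sq (x : ι → ℝ) (j : ι) : |x j| ≤ √(∑ i, x i ^ 2) :=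
  abs_le_sqrt (single_le_sum (fun i _ => sq_nonneg (x i)) (mem_univ j))

lemma tendsto_zero_of_sqrt_sum_sq_le_mul_exp {θ : ℝ → ι → ℝ} {C ν : ℝ} (hν : 0 < ν)
    (h : ∀ t, 0 ≤ t → √(∑ j, θ t j ^ 2) ≤ C * exp (-ν * t)) :
    Tendsto θ atTop (nhds 0) := by
  have hexp : Tendsto (fun t => C * exp (-ν * t)) atTop (nhds 0) := by
    simpa using (tendsto_exp_atBot.comp
      (tendsto_id.const_mul_atTop_of_neg (neg_lt_zero.2 hν))).const_mul C
  refine tendsto_pi_nhds.2 fun j => squeeze_zero_norm' ?_ hexp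
  filter_upwards [eventually_ge_atTop 0] with t ht
  exact (abs_le_sqrt_sum_sq (θ t) j).trans (h t ht)

/-- `a > 0` is the weight in Young's inequality. -/
lemma two_mul_dotProduct_gradient_le (Ψ : Matrix ι ι ℝ) (x e : ι → ℝ) {γ δ K C a : ℝ}
    (hγ : 0 ≤ γ) (ha : 0 < a)
    (hPE : δ * ∑ j, x j ^ 2 ≤ ∑ j, (Ψ *ᵥ x) j ^ 2)
    (hΨ : √(∑ j, (Ψ *ᵥ x) j ^ 2) ≤ K * √(∑ j, x j ^ 2))
    (he : √(∑ j, e j ^ 2) ≤ C) :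
    2 * (x ⬝ᵥ (-γ • (Ψᵀ *ᵥ (Ψ *ᵥ x)) + γ • (Ψᵀ *ᵥ e)))
      ≤ -2 * (γ * δ - a) * ∑ j, x j ^ 2 + (γ * K * C) ^ 2 / (2 * a) := by
  set p := Ψ *ᵥ x
  set s := √(∑ j, x j ^ 2)
  have hs : s ^ 2 = ∑ j, x j ^ 2 := sq_sqrt (sum_nonneg fun j _ => sq_nonneg (x j))
  have hpp : p ⬝ᵥ p = ∑ j, p j ^ 2 := by simp only [dotProduct, sq]
  have hpe : p ⬝ᵥ e ≤ K * s * C :=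
    (sum_mul_le_sqrt_mul_sqrt univ p e).trans
      (mul_le_mul hΨ he (sqrt_nonneg _) ((sqrt_nonneg _).trans hΨ))
  have young : 2 * (γ * K * C) * s ≤ 2 * a * s ^ 2 + (γ * K * C) ^ 2 / (2 * a) := by
    have h2a : 0 < 2 * a := by linarith
    have : 2 * (γ * K * C) * s - 2 * a * s ^ 2 ≤ (γ * K * C) ^ 2 / (2 * a) := by
      rw [le_div_iff₀ h2a]
      nlinarith [sq_nonneg (2 * a * s - γ * K * C)]
    linarith
  rw [dotProduct_add, dotProduct_smul, dotProduct_smul, Matrix.dotProduct_transpose_mulVec,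
    Matrix.dotProduct_transpose_mulVec, dotProduct_comm e, hpp, smul_eq_mul, smul_eq_mul]
  nlinarith [mul_le_mul_of_nonneg_left hPE hγ, mul_le_mul_of_nonneg_left hpe hγ]

lemma exists_sqrt_sum_sq_le_mul_exp {γ δ K C μ ν : ℝ} (hγ : 0 ≤ γ)
    (hνγδ : ν < γ * δ) (hνμ : ν < μ)
    {Ψ : ℝ → Matrix ι ι ℝ} {ε ϑ : ℝ → ι → ℝ}
    (hPE : ∀ t : ℝ, 0 ≤ t → ∀ x : ι → ℝ, δ * ∑ j, x j ^ 2 ≤ ∑ j, (Ψ t *ᵥ x) j ^ 2)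
    (hbound : ∀ t : ℝ, 0 ≤ t → ∀ x : ι → ℝ,
      √(∑ j, (Ψ t *ᵥ x) j ^ 2) ≤ K * √(∑ j, x j ^ 2))
    (hε : ∀ t : ℝ, 0 ≤ t → √(∑ j, ε t j ^ 2) ≤ C * exp (-μ * t))
    (hdyn : ∀ t : ℝ, HasDerivAt ϑ (-γ • ((Ψ t)ᵀ *ᵥ (Ψ t *ᵥ ϑ t)) + γ • ((Ψ t)ᵀ *ᵥ ε t)) t) :
    ∃ C' : ℝ, 0 ≤ C' ∧ ∀ t : ℝ, 0 ≤ t → √(∑ j, ϑ t j ^ 2) ≤ C' * exp (-ν * t) := by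
  set β := (γ * K * C) ^ 2 / (2 * (γ * δ - ν))
  have hβ : 0 ≤ β := div_nonneg (sq_nonneg _) (by linarith)
  have henergy : ∀ t, 0 ≤ t →
      2 * (ϑ t ⬝ᵥ (-γ • ((Ψ t)ᵀ *ᵥ (Ψ t *ᵥ ϑ t)) + γ • ((Ψ t)ᵀ *ᵥ ε t)))
      ≤ -(2 * ν) * ∑ j, ϑ t j ^ 2 + β * exp (-(2 * μ) * t) := by
    intro t ht
    have hsq : exp (-(2 * μ) * t) = exp (-μ * t) ^ 2 := by rw [← exp_nat_mul]; ring_nf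
    have := two_mul_dotProduct_gradient_le (Ψ t) (ϑ t) (ε t) hγ (sub_pos.2 hνγδ)
      (hPE t ht _) (hbound t ht _) (hε t ht)
    convert this using 2
    · ring
    · rw [hsq]; ring
  set M := ∑ j, ϑ 0 j ^ 2 + β / (2 * μ - 2 * ν)
  refine ⟨√M, sqrt_nonneg _, fun t ht => ?_⟩
  calc √(∑ j, ϑ t j ^ 2) ≤ √(M * exp (-(2 * ν) * t)) :=
        sqrt_le_sqrt (le_mul_exp_of_hasDerivAt_le (by linarith) hβ
          (fun s _ => hasDerivAt_sum_sq (hdyn s)) henergy ht)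
    _ = √M * exp (-ν * t) := by
        rw [sqrt_mul' _ (exp_pos _).le, ← exp_half]; ring_nf

end SumOfSquares

theorem gradient_descent_perturbed_convergence (n : ℕ)
    (γ δ K C μ : ℝ) (hγ : 0 < γ) (hδ : 0 < δ) (hμ : 0 < μ)
    (Ψ : ℝ → Matrix (Fin n) (Fin n) ℝ)
    (hPE : ∀ t : ℝ, 0 ≤ t → ∀ x : Fin n → ℝ,
      δ * ∑ j : Fin n, x j ^ 2 ≤ ∑ j : Fin n, (Ψ t *ᵥ x) j ^ 2)
    (hbound : ∀ t : ℝ, 0 ≤ t → ∀ x : Fin n → ℝ,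
      Real.sqrt (∑ j : Fin n, (Ψ t *ᵥ x) j ^ 2) ≤ K * Real.sqrt (∑ j : Fin n, x j ^ 2))
    (ε : ℝ → Fin n → ℝ)
    (hε : ∀ t : ℝ, 0 ≤ t →
      Real.sqrt (∑ j : Fin n, ε t j ^ 2) ≤ C * Real.exp (-μ * t))
    (ϑtil : ℝ → Fin n → ℝ)
    (hdyn : ∀ t : ℝ, HasDerivAt ϑtil
      (-γ • ((Ψ t)ᵀ *ᵥ (Ψ t *ᵥ ϑtil t)) + γ • ((Ψ t)ᵀ *ᵥ ε t)) t) :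
    Tendsto ϑtil atTop (nhds 0) ∧
    ∀ ν : ℝ, 0 < ν → ν < min (γ * δ) μ →
      ∃ C' : ℝ, 0 ≤ C' ∧ ∀ t : ℝ, 0 ≤ t →
        Real.sqrt (∑ j : Fin n, ϑtil t j ^ 2) ≤ C' * Real.exp (-ν * t) := by
  have decay : ∀ ν : ℝ, 0 < ν → ν < min (γ * δ) μ → ∃ C' : ℝ, 0 ≤ C' ∧ ∀ t : ℝ, 0 ≤ t →
      Real.sqrt (∑ j : Fin n, ϑtil t j ^ 2) ≤ C' * Real.exp (-ν * t) := fun ν _ hνmin =>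
    exists_sqrt_sum_sq_le_mul_exp hγ.le (lt_min_iff.1 hνmin).1 (lt_min_iff.1 hνmin).2
      hPE hbound hε hdyn
  have hmin : 0 < min (γ * δ) μ := lt_min (mul_pos hγ hδ) hμ
  obtain ⟨C', -, hC'⟩ := decay _ (half_pos hmin) (half_lt_self hmin)
  exact ⟨tendsto_zero_of_sqrt_sum_sq_le_mul_exp (half_pos hmin) hC', decay⟩
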